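/- arXiv:2101.07672 — 2 statements merged into one kernel-verified Lean document; each statement's English description precedes it below -/
import Mathlib

section
/- Let g_τ(x) = τ^{−n} exp(−π τ^{−2}⟨A_τ x, x⟩) for a positive definite matrix A_τ with |A_τ^{-1}| ≤ τ^{−ε} and det(A_τ)^{−1} ≤ τ^{−ε}, where ε ∈ (0,(1−γ)/2) and γ ∈ (0,1). Then there exists ν > 0 depending only on n, ε, γ such that for all τ ∈ (0,ν), ∫_{R^n} g_τ ≤ (1+τ^ε) ∫_{|x| ≤ τ^γ} g_τ. -/
/-!
Write `q x = ⟪A x, x⟫` and `c = π τ⁻²`. With `S` the square root of `A`, `A⁻¹ S` is a left inverse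
of `S` of norm `‖A⁻¹‖^{1/2}`, so `‖x‖² ≤ ‖A⁻¹‖ q x ≤ τ^{-ε} q x`. Outside the ball of radius
`R = τ^γ` this gives `exp (-c q) ≤ exp (-c R² τ^ε / 2) exp (-c q / 2)`, and the substitution
`x ↦ √2 x` shows `∫ exp (-c q / 2) = 2^{n/2} ∫ exp (-c q)`. Hence the part of the integral outside
the ball is at most `2^{n/2} exp (-(π/2) τ^{-(2 - 2γ - ε)})` times the whole integral, which is
`o(τ^ε)` because `2γ + ε < 2`.
-/

open Real MeasureTheory Filter Topology Metric Module
open scoped RealInnerProductSpace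

noncomputable def opNorm {n : ℕ} (A : Matrix (Fin n) (Fin n) ℝ) : ℝ :=
  ‖Matrix.toEuclideanCLM (𝕜 := ℝ) A‖

theorem ContinuousLinearMap.norm_sq_le_norm_sq_mul_inner_star_mul_self_apply
    {E : Type*} [NormedAddCommGroup E] [InnerProductSpace ℝ E] [CompleteSpace E]
    {S C : E →L[ℝ] E} (hCS : C * S = 1) (x : E) :
    ‖x‖ ^ 2 ≤ ‖C‖ ^ 2 * ⟪(star S * S) x, x⟫ := by
  have hS : ⟪(star S * S) x, x⟫ = ‖S x‖ ^ 2 := by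
    rw [star_eq_adjoint, apply_norm_sq_eq_inner_adjoint_left]
    rfl
  calc ‖x‖ ^ 2 = ‖C (S x)‖ ^ 2 := by rw [← mul_apply_eq_comp, hCS, one_apply_eq_self]
    _ ≤ (‖C‖ * ‖S x‖) ^ 2 := by gcongr; exact C.le_opNorm _
    _ = ‖C‖ ^ 2 * ⟪(star S * S) x, x⟫ := by rw [hS, mul_pow]

open scoped MatrixOrder in
theorem Matrix.PosDef.norm_sq_le_opNorm_inv_mul_inner {n : ℕ} {A : Matrix (Fin n) (Fin n) ℝ}
    (hA : A.PosDef) (x : EuclideanSpace ℝ (Fin n)) :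
    ‖x‖ ^ 2 ≤ opNorm A⁻¹ * ⟪Matrix.toEuclideanCLM (𝕜 := ℝ) A x, x⟫ := by
  set S := CFC.sqrt A
  have hS : star S = S := (CFC.sqrt_nonneg A).isSelfAdjoint.star_eq
  have hSS : S * S = A := CFC.sqrt_mul_sqrt_self A hA.posSemidef.nonneg
  have hdet : IsUnit A.det := hA.det_pos.ne'.isUnit
  have hA' : star A⁻¹ = A⁻¹ := hA.isHermitian.inv.eq
  have hCS : A⁻¹ * S * S = 1 := by
    rw [mul_assoc, hSS, Matrix.nonsing_inv_mul _ hdet]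
  have hCC : A⁻¹ * S * star (A⁻¹ * S) = A⁻¹ := by
    rw [star_mul, hS, hA', mul_assoc, ← mul_assoc S, hSS, ← mul_assoc,
      Matrix.nonsing_inv_mul _ hdet, one_mul]
  set φ := Matrix.toEuclideanCLM (n := Fin n) (𝕜 := ℝ)
  have hC : ‖φ (A⁻¹ * S)‖ ^ 2 = opNorm A⁻¹ := by
    rw [sq, ← CStarRing.norm_self_mul_star, ← map_star, ← map_mul, hCC]; rfl
  have key := ContinuousLinearMap.norm_sq_le_norm_sq_mul_inner_star_mul_self_apply
    (S := φ S) (C := φ (A⁻¹ * S)) (by rw [← map_mul, hCS, map_one]) x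
  rwa [← map_star, hS, ← map_mul, hSS, hC] at key

section GaussianQuadraticForm

variable {V : Type*} [NormedAddCommGroup V] [InnerProductSpace ℝ V] [FiniteDimensional ℝ V]
  [MeasurableSpace V] [BorelSpace V] {T : V →L[ℝ] V} {M c : ℝ}

theorem integrable_exp_neg_mul_sq_norm {b : ℝ} (hb : 0 < b) :
    Integrable fun x : V ↦ rexp (-b * ‖x‖ ^ 2) :=
  .of_integral_ne_zero <| by rw [GaussianFourier.integral_rexp_neg_mul_sq_norm hb]; positivity

theorem integrable_exp_neg_mul_inner_apply_self (hM : 0 < M)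
    (hT : ∀ x, ‖x‖ ^ 2 ≤ M * ⟪T x, x⟫) (hc : 0 < c) :
    Integrable fun x ↦ rexp (-c * ⟪T x, x⟫) := by
  refine (integrable_exp_neg_mul_sq_norm (div_pos hc hM)).mono' (by fun_prop)
    (.of_forall fun x ↦ ?_)
  rw [norm_of_nonneg (exp_pos _).le, exp_le_exp, neg_mul, neg_mul, neg_le_neg_iff]
  calc c / M * ‖x‖ ^ 2 ≤ c / M * (M * ⟪T x, x⟫) := by gcongr; exact hT x
    _ = c * ⟪T x, x⟫ := by field_simp

theorem integral_exp_neg_half_mul_inner_apply_self (c : ℝ) :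
    ∫ x, rexp (-(c / 2) * ⟪T x, x⟫) = √2 ^ finrank ℝ V * ∫ x, rexp (-c * ⟪T x, x⟫) := by
  have hscale : ∀ x, -(c / 2) * ⟪T (√2 • x), √2 • x⟫ = -c * ⟪T x, x⟫ := fun x ↦ by
    rw [map_smul, inner_smul_left, inner_smul_right, conj_trivial]
    linear_combination (-(c / 2) * ⟪T x, x⟫) * mul_self_sqrt (zero_le_two : (0 : ℝ) ≤ 2)
  have h := Measure.integral_comp_smul volume (fun x : V ↦ rexp (-(c / 2) * ⟪T x, x⟫)) √2
  simp only [hscale, smul_eq_mul] at h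
  rw [h, abs_of_pos (by positivity), ← mul_assoc, mul_inv_cancel₀ (by positivity), one_mul]

theorem setIntegral_compl_closedBall_exp_neg_mul_inner_le (hM : 0 < M)
    (hT : ∀ x, ‖x‖ ^ 2 ≤ M * ⟪T x, x⟫) (hc : 0 < c) {R : ℝ} (hR : 0 ≤ R) :
    ∫ x in (closedBall 0 R)ᶜ, rexp (-c * ⟪T x, x⟫) ≤
      √2 ^ finrank ℝ V * rexp (-c * R ^ 2 / (2 * M)) * ∫ x, rexp (-c * ⟪T x, x⟫) := by
  have hint := integrable_exp_neg_mul_inner_apply_self hM hT hc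
  have hint_half := integrable_exp_neg_mul_inner_apply_self hM hT (half_pos hc)
  have hpointwise : ∀ x ∈ (closedBall (0 : V) R)ᶜ,
      rexp (-c * ⟪T x, x⟫) ≤ rexp (-c * R ^ 2 / (2 * M)) * rexp (-(c / 2) * ⟪T x, x⟫) := by
    intro x hx
    rw [Set.mem_compl_iff, mem_closedBall, dist_zero_right, not_le] at hx
    have hRq : c * (R ^ 2 / M) ≤ c * ⟪T x, x⟫ := by
      gcongr
      rw [div_le_iff₀' hM]
      exact (pow_le_pow_left₀ hR hx.le 2).trans (hT x)
    rw [← exp_add, exp_le_exp]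
    linear_combination hRq / 2
  calc ∫ x in (closedBall 0 R)ᶜ, rexp (-c * ⟪T x, x⟫)
      ≤ ∫ x in (closedBall 0 R)ᶜ, rexp (-c * R ^ 2 / (2 * M)) * rexp (-(c / 2) * ⟪T x, x⟫) :=
        setIntegral_mono_on hint.integrableOn (hint_half.const_mul _).integrableOn
          measurableSet_closedBall.compl hpointwise
    _ = rexp (-c * R ^ 2 / (2 * M)) * ∫ x in (closedBall 0 R)ᶜ, rexp (-(c / 2) * ⟪T x, x⟫) :=
        integral_const_mul _ _
    _ ≤ rexp (-c * R ^ 2 / (2 * M)) * ∫ x, rexp (-(c / 2) * ⟪T x, x⟫) :=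
        mul_le_mul_of_nonneg_left
          (setIntegral_le_integral hint_half (.of_forall fun _ ↦ (exp_pos _).le)) (exp_pos _).le
    _ = √2 ^ finrank ℝ V * rexp (-c * R ^ 2 / (2 * M)) * ∫ x, rexp (-c * ⟪T x, x⟫) := by
        rw [integral_exp_neg_half_mul_inner_apply_self]
        ring

theorem integral_exp_neg_mul_inner_le_one_add_mul_setIntegral_closedBall (hM : 0 < M)
    (hT : ∀ x, ‖x‖ ^ 2 ≤ M * ⟪T x, x⟫) (hc : 0 < c) {R a : ℝ} (hR : 0 ≤ R) (ha : a ≤ 1)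
    (hK : √2 ^ finrank ℝ V * rexp (-c * R ^ 2 / (2 * M)) ≤ a / 2) :
    ∫ x, rexp (-c * ⟪T x, x⟫) ≤ (1 + a) * ∫ x in closedBall 0 R, rexp (-c * ⟪T x, x⟫) := by
  have hsplit := integral_add_compl (measurableSet_closedBall (x := (0 : V)) (ε := R))
    (integrable_exp_neg_mul_inner_apply_self hM hT hc)
  have hfull : 0 ≤ ∫ x, rexp (-c * ⟪T x, x⟫) := integral_nonneg fun _ ↦ (exp_pos _).le
  have htail := (setIntegral_compl_closedBall_exp_neg_mul_inner_le hM hT hc hR).trans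
    (mul_le_mul_of_nonneg_right hK hfull)
  have ha0 : 0 ≤ a := by
    linarith [show 0 < √2 ^ finrank ℝ V * rexp (-c * R ^ 2 / (2 * M)) by positivity]
  nlinarith [mul_le_mul_of_nonneg_left htail (by linarith : 0 ≤ 1 + a),
    mul_nonneg (mul_nonneg ha0 (sub_nonneg.mpr ha)) hfull]

end GaussianQuadraticForm

theorem tendsto_rpow_neg_mul_exp_neg_mul_rpow_neg_nhdsGT_zero (ε : ℝ) {b δ : ℝ} (hb : 0 < b)
    (hδ : 0 < δ) :
    Tendsto (fun τ : ℝ ↦ τ ^ (-ε) * rexp (-b * τ ^ (-δ))) (𝓝[>] 0) (𝓝 0) := by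
  have hinv : Tendsto (fun τ : ℝ ↦ τ ^ (-δ)) (𝓝[>] 0) atTop := by
    refine ((tendsto_rpow_atTop hδ).comp tendsto_inv_nhdsGT_zero).congr' ?_
    filter_upwards [self_mem_nhdsWithin] with τ (hτ : 0 < τ)
    rw [Function.comp_apply, inv_rpow hτ.le, rpow_neg hτ.le]
  refine ((tendsto_rpow_mul_exp_neg_mul_atTop_nhds_zero (ε / δ) b hb).comp hinv).congr' ?_
  filter_upwards [self_mem_nhdsWithin] with τ (hτ : 0 < τ)
  rw [Function.comp_apply, ← rpow_mul hτ.le]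
  congr 2
  field_simp

theorem eventually_sqrt_two_pow_mul_exp_le (d : ℕ) {ε γ : ℝ} (h : 2 * γ + ε < 2) :
    ∀ᶠ τ in 𝓝[>] 0,
      √2 ^ d * rexp (-(π * τ ^ (-2 : ℝ)) * (τ ^ γ) ^ 2 / (2 * τ ^ (-ε))) ≤ τ ^ ε / 2 := by
  have hlim := tendsto_rpow_neg_mul_exp_neg_mul_rpow_neg_nhdsGT_zero ε (by positivity : 0 < π / 2)
    (by linarith : 0 < 2 - 2 * γ - ε)
  filter_upwards [hlim.eventually_lt_const (by positivity : (0 : ℝ) < 1 / (2 * √2 ^ d)),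
    self_mem_nhdsWithin] with τ hdecay (hτ : 0 < τ)
  have hexponent : -(π * τ ^ (-2 : ℝ)) * (τ ^ γ) ^ 2 / (2 * τ ^ (-ε)) =
      -(π / 2) * τ ^ (-(2 - 2 * γ - ε)) := by
    rw [← rpow_natCast, ← rpow_mul hτ.le, show -(2 - 2 * γ - ε) = -2 + γ * (2 : ℕ) - -ε by ring,
      rpow_sub hτ, rpow_add hτ]
    ring
  rw [rpow_neg hτ.le, ← div_eq_inv_mul, div_lt_iff₀ (by positivity)] at hdecay
  calc √2 ^ d * rexp (-(π * τ ^ (-2 : ℝ)) * (τ ^ γ) ^ 2 / (2 * τ ^ (-ε)))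
      ≤ √2 ^ d * (1 / (2 * √2 ^ d) * τ ^ ε) := by rw [hexponent]; gcongr
    _ = τ ^ ε / 2 := by field_simp

theorem stmt6_general (n : ℕ) (ε γ : ℝ)
    (hε : 0 < ε) (hεγ : ε < (1 - γ) / 2) :
    ∃ ν > 0, ∀ τ ∈ Set.Ioo (0 : ℝ) ν,
      ∀ A : Matrix (Fin n) (Fin n) ℝ, A.PosDef →
      opNorm A⁻¹ ≤ τ ^ (-ε) → (A.det)⁻¹ ≤ τ ^ (-ε) →
      (∫ x : EuclideanSpace ℝ (Fin n),
          τ ^ (-(n : ℝ)) *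
            Real.exp (-π * τ ^ (-2 : ℝ) * ⟪Matrix.toEuclideanCLM (𝕜 := ℝ) A x, x⟫)) ≤
        (1 + τ ^ ε) *
          ∫ x in Metric.closedBall (0 : EuclideanSpace ℝ (Fin n)) (τ ^ γ),
            τ ^ (-(n : ℝ)) *
              Real.exp (-π * τ ^ (-2 : ℝ) * ⟪Matrix.toEuclideanCLM (𝕜 := ℝ) A x, x⟫) := by
  have hsmall := (eventually_sqrt_two_pow_mul_exp_le (finrank ℝ (EuclideanSpace ℝ (Fin n)))
    (by linarith : 2 * γ + ε < 2)).and
      (eventually_nhdsWithin_of_eventually_nhds (eventually_lt_nhds one_pos))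
  obtain ⟨ν, hν, hνsmall⟩ := mem_nhdsGT_iff_exists_Ioo_subset.mp hsmall
  refine ⟨ν, hν, fun τ hτ A hA hAinv _ ↦ ?_⟩
  obtain ⟨hK, hτ1⟩ := hνsmall hτ
  have hτ0 : 0 < τ := hτ.1
  have hT : ∀ x, ‖x‖ ^ 2 ≤ τ ^ (-ε) * ⟪Matrix.toEuclideanCLM (𝕜 := ℝ) A x, x⟫ := fun x ↦
    (hA.norm_sq_le_opNorm_inv_mul_inner x).trans <| mul_le_mul_of_nonneg_right hAinv <|
      (Matrix.isPositive_toEuclideanLin_iff.mpr hA.posSemidef).inner_nonneg_left x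
  have key := integral_exp_neg_mul_inner_le_one_add_mul_setIntegral_closedBall
    (rpow_pos_of_pos hτ0 _) hT (by positivity) (rpow_pos_of_pos hτ0 γ).le
    (rpow_le_one hτ0.le hτ1.le hε.le) hK
  simp_rw [neg_mul π, integral_const_mul]
  rw [mul_left_comm]
  exact mul_le_mul_of_nonneg_left key (rpow_pos_of_pos hτ0 _).le

/-- Truncation of gaussians: with `g_τ(x) = τ^{−n} exp(−πτ^{−2}⟨A_τ x, x⟩)`,
`A_τ` positive definite with `|A_τ⁻¹| ≤ τ^{−ε}` and `det(A_τ)⁻¹ ≤ τ^{−ε}`,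
`ε ∈ (0, (1−γ)/2)`, `γ ∈ (0,1)`, there is `ν > 0` depending only on `n, ε, γ`
such that for all `τ ∈ (0, ν)`,
`∫_{ℝⁿ} g_τ ≤ (1 + τ^ε) ∫_{|x| ≤ τ^γ} g_τ`. -/
theorem stmt6 (n : ℕ) (ε γ : ℝ) (hγ : γ ∈ Set.Ioo (0 : ℝ) 1)
    (hε : 0 < ε) (hεγ : ε < (1 - γ) / 2) :
    ∃ ν > 0, ∀ τ ∈ Set.Ioo (0 : ℝ) ν,
      ∀ A : Matrix (Fin n) (Fin n) ℝ, A.PosDef →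
      opNorm A⁻¹ ≤ τ ^ (-ε) → (A.det)⁻¹ ≤ τ ^ (-ε) →
      (∫ x : EuclideanSpace ℝ (Fin n),
          τ ^ (-(n : ℝ)) *
            Real.exp (-π * τ ^ (-2 : ℝ) * ⟪Matrix.toEuclideanCLM (𝕜 := ℝ) A x, x⟫)) ≤
        (1 + τ ^ ε) *
          ∫ x in Metric.closedBall (0 : EuclideanSpace ℝ (Fin n)) (τ ^ γ),
            τ ^ (-(n : ℝ)) *
              Real.exp (-π * τ ^ (-2 : ℝ) * ⟪Matrix.toEuclideanCLM (𝕜 := ℝ) A x, x⟫) :=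
  stmt6_general n ε γ hε hεγ
end

section
/- Suppose for each τ ∈ (0,1) a gaussian input A_τ(x) depending on x satisfies BL_g(dB(x), p; a_{2^{−k/2}τ}(x)) ≥ (1 − (2^{−k/2}τ)^α) BL(dB(x), p) for every k ≥ 1, and that A_τ(x) is obtained as the infinite harmonic sum of the a_{2^{−k/2}τ}(x) weighted by 2^{−k} (as in the infinite convolution of the corresponding gaussian kernels). Then BL_g(dB(x), p; A_τ(x)) ≥ (1 − τ^α (2^{α/2} − 1)^{−1}) BL(dB(x), p). -/
/-!
Ball's inequality `BLg X * BLg Y ≤ BL * BLg (X⁻¹ + Y⁻¹)⁻¹` makes the defects of near extremisers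
add under harmonic addition, since `(1 - δ₁)(1 - δ₂) ≥ 1 - (δ₁ + δ₂)`. By scale invariance the
weights `2^{-k}` cost nothing, so the `N`-th partial harmonic sum is a near extremiser with defect
`∑_{1 ≤ k ≤ N} (2^{-k/2} τ)^α`, and continuity of `BLg` and of matrix inversion carries this to the
infinite harmonic sum `A`, whose defect is the geometric series `τ^α (2^{α/2} - 1)⁻¹`. When that
defect exceeds `1` the claim is just `0 ≤ BLg A`, which is Ball's inequality with
`X = Y = A` combined with scale invariance.
-/

open Matrix Filter Topology Finset

namespace Matrix

variable {ι n K : Type*} [Fintype n] [DecidableEq n] [Field K]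

lemma inv_smul_of_ne_zero {M : Matrix n n K} (hM : IsUnit M.det) {c : K} (hc : c ≠ 0) :
    (c • M)⁻¹ = c⁻¹ • M⁻¹ :=
  inv_smul' _ (Units.mk0 c hc) hM

lemma inv_add_inv_self [NeZero (2 : K)] {M : Matrix n n K} (hM : IsUnit M.det) :
    (M⁻¹ + M⁻¹)⁻¹ = (2 : K)⁻¹ • M := by
  rw [← two_smul K, inv_smul_of_ne_zero (isUnit_nonsing_inv_det M hM) two_ne_zero,
    nonsing_inv_nonsing_inv M hM]

variable [TopologicalSpace K]

lemma summable_of_inv_eq_tsum {f : ι → Matrix n n K} {M : Matrix n n K} (hM : IsUnit M.det)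
    (h : M⁻¹ = ∑' k, f k) : Summable f := by
  by_contra hf
  rw [tsum_eq_zero_of_not_summable hf] at h
  have : Subsingleton (Matrix n n K) :=
    subsingleton_of_zero_eq_one (by rw [← nonsing_inv_mul M hM, h, zero_mul])
  exact hf (Subsingleton.elim 0 f ▸ summable_zero)

lemma tendsto_inv_sum_range_of_hasSum [IsTopologicalRing K] [ContinuousInv₀ K]
    {f : ℕ → Matrix n n K} {M : Matrix n n K} (hM : IsUnit M.det) (hf : HasSum f M⁻¹) :
    Tendsto (fun N => (∑ k ∈ range N, f k)⁻¹) atTop (𝓝 M) := by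
  have hinv : ContinuousAt Inv.inv M⁻¹ := continuousAt_matrix_inv _ <| by
    rw [Ring.inverse_eq_inv']
    exact continuousAt_inv₀ (isUnit_nonsing_inv_det M hM).ne_zero
  have h := hinv.tendsto.comp hf.tendsto_sum_nat
  rwa [nonsing_inv_nonsing_inv M hM] at h

end Matrix

section BrascampLieb

variable {ι : Type*} {n : ι → Type*} [∀ i, Fintype (n i)] [∀ i, DecidableEq (n i)]
  {BL : ℝ} {BLg : (∀ i, Matrix (n i) (n i) ℝ) → ℝ}

def BallInequality (BL : ℝ) (BLg : (∀ i, Matrix (n i) (n i) ℝ) → ℝ) : Prop :=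
  ∀ X Y : ∀ i, Matrix (n i) (n i) ℝ, BLg X * BLg Y ≤ BL * BLg (fun i => ((X i)⁻¹ + (Y i)⁻¹)⁻¹)

lemma BallInequality.nonneg (hBL : 0 ≤ BL) (hball : BallInequality BL BLg)
    (hscale : ∀ c : ℝ, 0 < c → ∀ X, BLg (fun i => c • X i) = BLg X)
    {X : ∀ i, Matrix (n i) (n i) ℝ} (hX : ∀ i, IsUnit (X i).det) : 0 ≤ BLg X := by
  have hsq : BLg X * BLg X ≤ BL * BLg X := by
    have h := hball X X
    simp_rw [inv_add_inv_self (hX _)] at h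
    rwa [hscale _ (by norm_num)] at h
  nlinarith

lemma BallInequality.near_extremiser_harmonic (hBL : 0 < BL) (hball : BallInequality BL BLg)
    {X Y : ∀ i, Matrix (n i) (n i) ℝ} {δ₁ δ₂ : ℝ} (hδ₁ : δ₁ ∈ Set.Icc 0 1)
    (hδ₂ : δ₂ ∈ Set.Icc 0 1) (hX : (1 - δ₁) * BL ≤ BLg X) (hY : (1 - δ₂) * BL ≤ BLg Y) :
    (1 - (δ₁ + δ₂)) * BL ≤ BLg (fun i => ((X i)⁻¹ + (Y i)⁻¹)⁻¹) := by
  obtain ⟨h₁, h₁'⟩ := hδ₁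
  obtain ⟨h₂, h₂'⟩ := hδ₂
  refine le_of_mul_le_mul_left ?_ hBL
  calc BL * ((1 - (δ₁ + δ₂)) * BL)
      ≤ (1 - δ₁) * BL * ((1 - δ₂) * BL) := by nlinarith [mul_nonneg h₁ h₂, mul_pos hBL hBL]
    _ ≤ BLg X * BLg Y :=
      mul_le_mul hX hY (by nlinarith) ((by nlinarith : 0 ≤ (1 - δ₁) * BL).trans hX)
    _ ≤ BL * BLg (fun i => ((X i)⁻¹ + (Y i)⁻¹)⁻¹) := hball X Y

lemma BallInequality.near_extremiser_inv_sum_range (hBL : 0 < BL)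
    (hball : BallInequality BL BLg) {c : ℕ → ∀ i, Matrix (n i) (n i) ℝ}
    (hc : ∀ k i, (c k i).PosDef) {δ : ℕ → ℝ} (hδ : ∀ k, 0 ≤ δ k)
    (hnear : ∀ k, (1 - δ k) * BL ≤ BLg (fun i => (c k i)⁻¹)) (N : ℕ)
    (hN : ∑ k ∈ range (N + 1), δ k ≤ 1) :
    (1 - ∑ k ∈ range (N + 1), δ k) * BL ≤ BLg (fun i => (∑ k ∈ range (N + 1), c k i)⁻¹) := by
  induction N with
  | zero => simpa using hnear 0
  | succ N ih =>
    simp only [sum_range_succ _ (N + 1)] at hN ⊢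
    have hsum_nonneg : 0 ≤ ∑ k ∈ range (N + 1), δ k := sum_nonneg fun k _ => hδ k
    have hstep := hball.near_extremiser_harmonic hBL
      ⟨hsum_nonneg, by linarith [hδ (N + 1)]⟩ ⟨hδ (N + 1), by linarith⟩
      (ih (by linarith [hδ (N + 1)])) (hnear (N + 1))
    have hsum_inv_inv : ∀ i, ((∑ k ∈ range (N + 1), c k i)⁻¹)⁻¹ = ∑ k ∈ range (N + 1), c k i :=
      fun i => nonsing_inv_nonsing_inv _
        (posDef_sum nonempty_range_add_one fun k _ => hc k i).det_pos.ne'.isUnit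
    have hc_inv_inv : ∀ k i, ((c k i)⁻¹)⁻¹ = c k i :=
      fun k i => nonsing_inv_nonsing_inv _ (hc k i).det_pos.ne'.isUnit
    simp_rw [hsum_inv_inv, hc_inv_inv] at hstep
    exact hstep

lemma BallInequality.near_extremiser_of_hasSum_of_le_one (hBL : 0 < BL)
    (hball : BallInequality BL BLg) (hcont : Continuous BLg)
    {c : ℕ → ∀ i, Matrix (n i) (n i) ℝ} (hc : ∀ k i, (c k i).PosDef) {δ : ℕ → ℝ}
    (hδ : ∀ k, 0 ≤ δ k) (hnear : ∀ k, (1 - δ k) * BL ≤ BLg (fun i => (c k i)⁻¹))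
    {D : ℝ} (hD : HasSum δ D) (hD1 : D ≤ 1) {A : ∀ i, Matrix (n i) (n i) ℝ}
    (hA : ∀ i, IsUnit (A i).det) (hcA : ∀ i, HasSum (fun k => c k i) (A i)⁻¹) :
    (1 - D) * BL ≤ BLg A := by
  have hpartial_le : ∀ N, ∑ k ∈ range N, δ k ≤ D := fun N => sum_le_hasSum _ (fun k _ => hδ k) hD
  have hlim : Tendsto (fun N => (fun i => (∑ k ∈ range (N + 1), c k i)⁻¹)) atTop (𝓝 A) :=
    tendsto_pi_nhds.2 fun i =>
      (tendsto_add_atTop_iff_nat 1).2 (tendsto_inv_sum_range_of_hasSum (hA i) (hcA i))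
  refine ge_of_tendsto ((hcont.tendsto A).comp hlim) (Eventually.of_forall fun N => ?_)
  calc (1 - D) * BL ≤ (1 - ∑ k ∈ range (N + 1), δ k) * BL := by
        gcongr
        exact hpartial_le _
    _ ≤ _ := hball.near_extremiser_inv_sum_range hBL hc hδ hnear N ((hpartial_le _).trans hD1)

lemma BallInequality.near_extremiser_of_hasSum (hBL : 0 < BL) (hball : BallInequality BL BLg)
    (hscale : ∀ c : ℝ, 0 < c → ∀ X, BLg (fun i => c • X i) = BLg X) (hcont : Continuous BLg)
    {c : ℕ → ∀ i, Matrix (n i) (n i) ℝ} (hc : ∀ k i, (c k i).PosDef) {δ : ℕ → ℝ}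
    (hδ : ∀ k, 0 ≤ δ k) (hnear : ∀ k, (1 - δ k) * BL ≤ BLg (fun i => (c k i)⁻¹))
    {D : ℝ} (hD : HasSum δ D) {A : ∀ i, Matrix (n i) (n i) ℝ}
    (hA : ∀ i, IsUnit (A i).det) (hcA : ∀ i, HasSum (fun k => c k i) (A i)⁻¹) :
    (1 - D) * BL ≤ BLg A := by
  rcases le_or_gt D 1 with hD1 | hD1
  · exact hball.near_extremiser_of_hasSum_of_le_one hBL hcont hc hδ hnear hD hD1 hA hcA
  · exact (mul_nonpos_of_nonpos_of_nonneg (by linarith) hBL.le).trans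
      (hball.nonneg hBL.le hscale hA)

end BrascampLieb

lemma hasSum_rpow_two_pow_neg_half_mul {τ α : ℝ} (hτ : 0 ≤ τ) (hα : 0 < α) :
    HasSum (fun k : ℕ => ((2 : ℝ) ^ (-((k + 1 : ℕ) : ℝ) / 2) * τ) ^ α)
      (τ ^ α * ((2 : ℝ) ^ (α / 2) - 1)⁻¹) := by
  set r : ℝ := ((2 : ℝ) ^ (α / 2))⁻¹ with hr
  have hs : 1 < (2 : ℝ) ^ (α / 2) := Real.one_lt_rpow one_lt_two (by positivity)
  have hr1 : r < 1 := inv_lt_one_of_one_lt₀ hs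
  have hterm : ∀ k : ℕ, ((2 : ℝ) ^ (-((k + 1 : ℕ) : ℝ) / 2) * τ) ^ α = τ ^ α * (r * r ^ k) := by
    intro k
    rw [← pow_succ', hr, inv_pow, ← Real.rpow_natCast, ← Real.rpow_mul zero_le_two,
      Real.mul_rpow (by positivity) hτ, ← Real.rpow_mul zero_le_two, ← Real.rpow_neg zero_le_two,
      mul_comm]
    congr 2
    ring
  have hlimit : r * (1 - r)⁻¹ = ((2 : ℝ) ^ (α / 2) - 1)⁻¹ := by
    rw [hr]
    field_simp
  simp_rw [hterm, ← hlimit]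
  exact ((hasSum_geometric_of_lt_one (by positivity) hr1).mul_left r).mul_left _

/-- Iterated near-extremiser stability under infinite weighted harmonic addition:
if each `a_{2^{−k/2}τ}(x)` is a `(2^{−k/2}τ)^α`-near extremiser for the datum
`(dB(x), p)` (with constant `BL = BL(dB(x), p) > 0` and gaussian Brascamp–Lieb
functional `BLg` satisfying Ball's inequality, scale invariance and continuity),
and `A_τ(x)` is the infinite harmonic sum of the `a_{2^{−k/2}τ}(x)` weighted by
`2^{−k}`, then `BLg(A_τ(x)) ≥ (1 − τ^α (2^{α/2} − 1)⁻¹) BL`. -/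
theorem stmt14 {m : ℕ} (nj : Fin m → ℕ)
    (BL : ℝ) (hBL : 0 < BL)
    (BLg : (∀ j, Matrix (Fin (nj j)) (Fin (nj j)) ℝ) → ℝ)
    (hcont : Continuous BLg)
    (hscale : ∀ c : ℝ, 0 < c → ∀ X, BLg (fun j => c • X j) = BLg X)
    (hball : ∀ X Y : ∀ j, Matrix (Fin (nj j)) (Fin (nj j)) ℝ,
      BLg X * BLg Y ≤ BL * BLg (fun j => ((X j)⁻¹ + (Y j)⁻¹)⁻¹))
    (τ α : ℝ) (hτ : τ ∈ Set.Ioo (0 : ℝ) 1) (hα : 0 < α)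
    (a : ℕ → ∀ j, Matrix (Fin (nj j)) (Fin (nj j)) ℝ)
    (hpd : ∀ k j, (a k j).PosDef)
    (hnear : ∀ k : ℕ, 1 ≤ k →
      (1 - ((2 : ℝ) ^ (-(k : ℝ) / 2) * τ) ^ α) * BL ≤ BLg (a k))
    (A : ∀ j, Matrix (Fin (nj j)) (Fin (nj j)) ℝ)
    (hApd : ∀ j, (A j).PosDef)
    (hharm : ∀ j, (A j)⁻¹ = ∑' k : ℕ, (2 : ℝ) ^ (-((k : ℝ) + 1)) • (a (k + 1) j)⁻¹) :
    (1 - τ ^ α * ((2 : ℝ) ^ (α / 2) - 1)⁻¹) * BL ≤ BLg A := by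
  have hw : ∀ k : ℕ, 0 < (2 : ℝ) ^ (-((k : ℝ) + 1)) := fun k => by positivity
  set c : ℕ → ∀ j, Matrix (Fin (nj j)) (Fin (nj j)) ℝ :=
    fun k j => (2 : ℝ) ^ (-((k : ℝ) + 1)) • (a (k + 1) j)⁻¹
  have hc : ∀ k j, (c k j).PosDef := fun k j => (hpd (k + 1) j).inv.smul (hw k)
  have hc_near : ∀ k : ℕ, (1 - ((2 : ℝ) ^ (-((k + 1 : ℕ) : ℝ) / 2) * τ) ^ α) * BL ≤
      BLg (fun j => (c k j)⁻¹) := by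
    intro k
    have hc_inv : (fun j => (c k j)⁻¹) = fun j => ((2 : ℝ) ^ (-((k : ℝ) + 1)))⁻¹ • a (k + 1) j :=
      funext fun j => by
        have hdet := (hpd (k + 1) j).det_pos.ne'.isUnit
        rw [inv_smul_of_ne_zero (isUnit_nonsing_inv_det _ hdet) (hw k).ne',
          nonsing_inv_nonsing_inv _ hdet]
    rw [hc_inv, hscale _ (inv_pos.2 (hw k))]
    exact hnear (k + 1) (Nat.le_add_left 1 k)
  have hA : ∀ j, IsUnit (A j).det := fun j => (hApd j).det_pos.ne'.isUnit
  have hcA : ∀ j, HasSum (fun k => c k j) (A j)⁻¹ := fun j =>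
    hharm j ▸ (summable_of_inv_eq_tsum (hA j) (hharm j)).hasSum
  exact BallInequality.near_extremiser_of_hasSum hBL hball hscale hcont hc
    (fun k => Real.rpow_nonneg (mul_nonneg (by positivity) hτ.1.le) α) hc_near
    (hasSum_rpow_two_pow_neg_half_mul hτ.1.le hα) hA hcA
end
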